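/- Let p be a nonzero Laurent polynomial in z₁,…,z_d over ℂ with lowest degree component h, and assume the Laurent polynomials h(μ_n⊙z), n ∈ W, are pairwise distinct (Assumption A₂). Then for all n ≠ n' in W, the polynomials r_n(z,λ̃) = λ̃ z₁^{γ₁'}⋯z_d^{γ_d'} h(μ_n⊙z) − z₁^{γ₁'}⋯z_d^{γ_d'} and r_{n'}(z,λ̃) = λ̃ z₁^{γ₁'}⋯z_d^{γ_d'} h(μ_{n'}⊙z) − z₁^{γ₁'}⋯z_d^{γ_d'} are relatively prime in ℂ[z₁,…,z_d,λ̃], i.e. they have no common non-constant polynomial factor. -/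

import Mathlib

open scoped BigOperators
open Complex

noncomputable section

/-- Laurent polynomials in `z₁,…,z_d` over `ℂ`, encoded as the group algebra of `ℤ^d`. -/
abbrev LMv (d : ℕ) : Type := AddMonoidAlgebra ℂ (Fin d →₀ ℤ)

/-- Laurent polynomials in `z₁,…,z_d` and `λ` over `ℂ`. -/
abbrev LMvF (d : ℕ) : Type := AddMonoidAlgebra ℂ ((Fin d →₀ ℤ) × ℤ)

/-- `e^{2πin/q}`. -/
def muC (q : ℕ) (n : ℤ) : ℂ := Complex.exp (2 * Real.pi * Complex.I * n / q)

/-- The vector `μ_n = (e^{2πin₁/q₁},…,e^{2πin_d/q_d})`. -/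
def muV {d : ℕ} (q : Fin d → ℕ) (n : Fin d → ℤ) : Fin d → ℂ := fun j => muC (q j) (n j)

/-- Substitution `z_j ↦ c_j z_j` in a Laurent polynomial in `z`. -/
def scaleZ {d : ℕ} (c : Fin d → ℂ) (p : LMv d) : LMv d :=
  AddMonoidAlgebra.ofCoeff (Finsupp.sum p.coeff fun α a => Finsupp.single α ((∏ j, c j ^ (α j)) * a))

/-- Substitution `z_j ↦ c_j z_j` in a Laurent polynomial in `(z, λ)` (leaving `λ` alone). -/
def scaleZF {d : ℕ} (c : Fin d → ℂ) (P : LMvF d) : LMvF d :=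
  AddMonoidAlgebra.ofCoeff (Finsupp.sum P.coeff fun β a => Finsupp.single β ((∏ j, c j ^ (β.1 j)) * a))

/-- Total degree `α₁ + ⋯ + α_d` of a monomial exponent. -/
def degS {d : ℕ} (α : Fin d →₀ ℤ) : ℤ := ∑ j, α j

/-- `L₋`, the minimal total degree of a (nonzero) Laurent polynomial. -/
def lowDeg {d : ℕ} (p : LMv d) : ℤ := ((Finsupp.support p.coeff).image degS).min.untopD 0

/-- The lowest degree component of a Laurent polynomial. -/
def lowComp {d : ℕ} (p : LMv d) : LMv d :=
  AddMonoidAlgebra.ofCoeff (Finsupp.filter (fun α => degS α = lowDeg p) p.coeff)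

/-- The fundamental cell `W = {n ∈ ℤ^d : 0 ≤ n_j ≤ q_j - 1}`. -/
def Wcell {d : ℕ} (q : Fin d → ℕ) : Finset (Fin d → ℤ) :=
  Fintype.piFinset fun j => (Finset.range (q j)).image (fun k : ℕ => (k : ℤ))

/-- The canonical embedding of Laurent polynomials in `z` into Laurent polynomials in `(z,λ)`. -/
def embedZ {d : ℕ} (p : LMv d) : LMvF d := AddMonoidAlgebra.ofCoeff (Finsupp.mapDomain (fun α => (α, (0:ℤ))) p.coeff)

/-- The variable `λ`. -/
def lamF (d : ℕ) : LMvF d := AddMonoidAlgebra.ofCoeff (Finsupp.single ((0 : Fin d →₀ ℤ), (1:ℤ)) (1:ℂ))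

/-- Exponent stretching `α ↦ (q₁α₁,…,q_dα_d)`. -/
def stretchE {d : ℕ} (q : Fin d → ℕ) (α : Fin d →₀ ℤ) : Fin d →₀ ℤ :=
  Finsupp.sum α fun j a => Finsupp.single j ((q j : ℤ) * a)

/-- The substitution `𝒫(w,λ) ↦ 𝒫(z₁^{q₁},…,z_d^{q_d},λ)`. -/
def stretchF {d : ℕ} (q : Fin d → ℕ) (P : LMvF d) : LMvF d :=
  AddMonoidAlgebra.ofCoeff (Finsupp.mapDomain (fun β => (stretchE q β.1, β.2)) P.coeff)

/-- Assumption (A₂): the Laurent polynomials `h(μ_n ⊙ z)`, `n ∈ W`, are pairwise distinct. -/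
def PairwiseDistinctH {d : ℕ} (q : Fin d → ℕ) (h : LMv d) : Prop :=
  ∀ n ∈ Wcell q, ∀ n' ∈ Wcell q, n ≠ n' → scaleZ (muV q n) h ≠ scaleZ (muV q n') h

/-- The polynomial `𝒫̃(z,λ) = ∏_{n∈W}(p(μ_n⊙z) − λ) + Σ_{X∈𝒮} C_X ∏_{n∈X}(p(μ_n⊙z) − λ)`. -/
def Ptilde {d : ℕ} (q : Fin d → ℕ) (p : LMv d)
    (S : Finset (Finset (Fin d → ℤ))) (C : Finset (Fin d → ℤ) → ℂ) : LMvF d :=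
  (∏ n ∈ Wcell q, (embedZ (scaleZ (muV q n) p) - lamF d))
    + ∑ X ∈ S, C X • ∏ n ∈ X, (embedZ (scaleZ (muV q n) p) - lamF d)
/-- The symbol `p(z) = Σ_n a_n z^{-n}` of a finite-range Toeplitz operator. -/
def symbA {d : ℕ} (a : (Fin d → ℤ) →₀ ℂ) : LMv d :=
  AddMonoidAlgebra.ofCoeff (Finsupp.sum a fun n c => Finsupp.single (-(Finsupp.equivFunOnFinite.symm n)) c)

/-- `V` is `q`-periodic. -/
def IsPeriodic {d : ℕ} (q : Fin d → ℕ) (V : (Fin d → ℤ) → ℂ) : Prop :=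
  ∀ (n : Fin d → ℤ) (j : Fin d), V (n + (q j : ℤ) • Pi.single j 1) = V n

/-- The discrete Fourier transform `V̂_ℓ = Q^{-1/2} Σ_{m∈W} e^{-2πi⟨m,ℓ⟩} V_m`. -/
def Vhat {d : ℕ} (q : Fin d → ℕ) (V : (Fin d → ℤ) → ℂ) (l : Fin d → ℝ) : ℂ :=
  ((1 / Real.sqrt (∏ j, (q j : ℝ)) : ℝ) : ℂ) *
    ∑ m ∈ Wcell q, Complex.exp (-(2 * Real.pi * Complex.I) *
      ((∑ j, (m j : ℝ) * l j : ℝ) : ℂ)) * V m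

/-- The diagonal matrix `D^z` with entries `p(μ_n ⊙ z)`, as Laurent polynomials. -/
def Dmat {d : ℕ} (q : Fin d → ℕ) (p : LMv d) :
    Matrix {n // n ∈ Wcell q} {n // n ∈ Wcell q} (LMvF d) :=
  Matrix.diagonal fun n => embedZ (scaleZ (muV q n.1) p)

/-- The constant matrix `B` with entries `V̂((n-n')/q)`. -/
def Bmat {d : ℕ} (q : Fin d → ℕ) (V : (Fin d → ℤ) → ℂ) :
    Matrix {n // n ∈ Wcell q} {n // n ∈ Wcell q} (LMvF d) :=
  fun n n' => AddMonoidAlgebra.ofCoeff (Finsupp.single ((0 : Fin d →₀ ℤ), (0:ℤ))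
    (Vhat q V fun j => ((n.1 j - n'.1 j : ℤ) : ℝ) / (q j : ℝ)))

/-- `det(D^z + B - λI)`, a Laurent polynomial in `z` and `λ`. -/
def detLaur {d : ℕ} (q : Fin d → ℕ) (p : LMv d) (V : (Fin d → ℤ) → ℂ) : LMvF d :=
  Matrix.det (Dmat q p + Bmat q V - Matrix.diagonal fun _ => lamF d)
/-- Ordinary polynomials in `z₁,…,z_d` and `λ̃` (the extra `Unit` variable is `λ̃`). -/
abbrev MvP (d : ℕ) : Type := MvPolynomial (Fin d ⊕ Unit) ℂ

/-- Conversion of a Laurent polynomial in `(z,λ)` with nonnegative exponents into an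
ordinary polynomial in `ℂ[z₁,…,z_d,λ̃]` (negative exponents are truncated). -/
def toMvP {d : ℕ} (P : LMvF d) : MvP d :=
  Finsupp.sum P.coeff fun β c =>
    MvPolynomial.monomial
      (Finsupp.equivFunOnFinite.symm
        (Sum.elim (fun j => (β.1 j).toNat) (fun _ => β.2.toNat))) c

/-- `γ_j(p)`: minus the lowest exponent of `z_j` in `p` if that exponent is negative,
and `0` otherwise. -/
def gammaV {d : ℕ} (p : LMv d) (j : Fin d) : ℤ :=
  max 0 (-(((Finsupp.support p.coeff).image fun α => α j).min.untopD 0))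

/-- The exponent vector `γ' = (γ₁',…,γ_d')` computed from the lowest degree component of `p`. -/
def gammaE' {d : ℕ} (p : LMv d) : Fin d →₀ ℤ :=
  Finsupp.equivFunOnFinite.symm fun j => gammaV (lowComp p) j

/-- The polynomial `r_n(z,λ̃) = λ̃ z^{γ'} h(μ_n⊙z) − z^{γ'} ∈ ℂ[z,λ̃]`. -/
def rPoly {d : ℕ} (q : Fin d → ℕ) (p : LMv d) (n : Fin d → ℤ) : MvP d :=
  MvPolynomial.X (Sum.inr ()) *
      toMvP ((AddMonoidAlgebra.single (gammaE' p, (0:ℤ)) (1:ℂ) : LMvF d) * embedZ (scaleZ (muV q n) (lowComp p)))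
    - toMvP (AddMonoidAlgebra.ofCoeff (Finsupp.single (gammaE' p, (0:ℤ)) (1:ℂ)))

/-- Substitution `w_j ↦ z_j^{q_j}` (fixing `λ̃`) on ordinary polynomials. -/
def stretchMv {d : ℕ} (q : Fin d → ℕ) : MvP d →ₐ[ℂ] MvP d :=
  MvPolynomial.aeval
    (Sum.elim (fun j => MvPolynomial.X (Sum.inl j) ^ q j)
      (fun _ => MvPolynomial.X (Sum.inr ())))

/-- Substitution `z_j ↦ c_j z_j` (fixing `λ̃`) on ordinary polynomials. -/
def scaleMv {d : ℕ} (c : Fin d → ℂ) : MvP d →ₐ[ℂ] MvP d :=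
  MvPolynomial.aeval
    (Sum.elim (fun j => MvPolynomial.C (c j) * MvPolynomial.X (Sum.inl j))
      (fun _ => MvPolynomial.X (Sum.inr ())))

/-- `ã(z,λ̃) = ∏_{n∈W} r_n(z,λ̃)`. -/
def atilde {d : ℕ} (q : Fin d → ℕ) (p : LMv d) : MvP d := ∏ n ∈ Wcell q, rPoly q p n

/-- Substitution `λ ↦ λ̃⁻¹` on Laurent polynomials in `(z,λ)`. -/
def invLam {d : ℕ} (P : LMvF d) : LMvF d :=
  AddMonoidAlgebra.ofCoeff (Finsupp.mapDomain (fun β : (Fin d →₀ ℤ) × ℤ => (β.1, -β.2)) P.coeff)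

/-- The exponent vector `(γ₁ Q/q₁, …, γ_d Q/q_d)` computed from `p`. -/
def gammaQE {d : ℕ} (q : Fin d → ℕ) (p : LMv d) : Fin d →₀ ℤ :=
  Finsupp.equivFunOnFinite.symm fun j => gammaV p j * (((∏ i, q i) / q j : ℕ) : ℤ)

/-- `ℛ(w,λ̃) = λ̃^Q w₁^{γ₁Q/q₁}⋯w_d^{γ_dQ/q_d} 𝒫(w,λ̃⁻¹)`. -/
def Rcal {d : ℕ} (q : Fin d → ℕ) (p : LMv d) (P : LMvF d) : LMvF d :=
  (AddMonoidAlgebra.single (gammaQE q p, ((∏ j, q j : ℕ) : ℤ)) (1:ℂ) : LMvF d) * invLam P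
/-- Reduction of `v ∈ ℤ^d` modulo the lattice `q₁ℤ ⊕ ⋯ ⊕ q_dℤ` into `W`. -/
def modW {d : ℕ} (q : Fin d → ℕ) (hq : ∀ j, 1 ≤ q j) (v : Fin d → ℤ) :
    {x // x ∈ Wcell q} :=
  ⟨fun j => v j % (q j : ℤ), by
    simp only [Wcell, Fintype.mem_piFinset, Finset.mem_image, Finset.mem_range]
    intro j
    have h1 : (0:ℤ) < (q j : ℤ) := by exact_mod_cast hq j
    have h2 : v j % (q j : ℤ) < (q j : ℤ) := Int.emod_lt_of_pos _ h1
    have h3 : (0:ℤ) ≤ v j % (q j : ℤ) := Int.emod_nonneg _ (by omega)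
    exact ⟨(v j % (q j : ℤ)).toNat, by omega, by omega⟩⟩

/-- The extension `u^x` of `u : ℂ^W` to `ℤ^d` satisfying `u^x_{n+m⊙q} = e^{2πi⟨m⊙q,x⟩}u_n`. -/
def extFn {d : ℕ} (q : Fin d → ℕ) (hq : ∀ j, 1 ≤ q j) (x : Fin d → ℝ)
    (u : {n // n ∈ Wcell q} → ℂ) (v : Fin d → ℤ) : ℂ :=
  Complex.exp (2 * Real.pi * Complex.I *
      ∑ j, ((((v j / (q j : ℤ)) * (q j : ℤ) : ℤ) : ℂ) * ((x j : ℝ) : ℂ))) *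
    u (modW q hq v)

/-- The Floquet restriction `H̃(x)` of `H = A + V` to `ℂ^W`. -/
def HtildeFn {d : ℕ} (q : Fin d → ℕ) (hq : ∀ j, 1 ≤ q j) (x : Fin d → ℝ)
    (a : (Fin d → ℤ) →₀ ℂ) (V : (Fin d → ℤ) → ℂ)
    (u : {n // n ∈ Wcell q} → ℂ) : {n // n ∈ Wcell q} → ℂ :=
  fun m => (Finsupp.sum a fun k c => c * extFn q hq x u (fun j => m.1 j - k j)) + V m.1 * u m

/-- The matrix of `H̃(x)` in the standard basis of `ℂ^W`. -/
def Hmat {d : ℕ} (q : Fin d → ℕ) (hq : ∀ j, 1 ≤ q j) (x : Fin d → ℝ)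
    (a : (Fin d → ℤ) →₀ ℂ) (V : (Fin d → ℤ) → ℂ) :
    Matrix {n // n ∈ Wcell q} {n // n ∈ Wcell q} ℂ :=
  fun m n => HtildeFn q hq x a V (Pi.single n 1) m

/-- The Floquet–Bloch transform matrix `ℱ^x`. -/
def Fmat {d : ℕ} (q : Fin d → ℕ) (x : Fin d → ℝ) :
    Matrix {n // n ∈ Wcell q} {n // n ∈ Wcell q} ℂ :=
  fun l n => ((1 / Real.sqrt (∏ j, (q j : ℝ)) : ℝ) : ℂ) *
    Complex.exp (-(2 * Real.pi * Complex.I) *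
      ∑ j, ((((l.1 j : ℝ) / (q j : ℝ) + x j : ℝ) : ℂ) * ((n.1 j : ℤ) : ℂ)))

/-- Numerical evaluation of the symbol `p(z) = Σ_n a_n z^{-n}`. -/
def pEvalN {d : ℕ} (a : (Fin d → ℤ) →₀ ℂ) (z : Fin d → ℂ) : ℂ :=
  Finsupp.sum a fun n c => c * ∏ j, z j ^ (-(n j))

/-- The numerical diagonal matrix `D^z`, `z = e^{2πix}`, with entries `p(μ_n ⊙ z)`. -/
def DmatN {d : ℕ} (q : Fin d → ℕ) (x : Fin d → ℝ) (a : (Fin d → ℤ) →₀ ℂ) :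
    Matrix {n // n ∈ Wcell q} {n // n ∈ Wcell q} ℂ :=
  Matrix.diagonal fun n => pEvalN a fun j =>
    muC (q j) (n.1 j) * Complex.exp (2 * Real.pi * Complex.I * ((x j : ℝ) : ℂ))

/-- The numerical matrix `B`. -/
def BmatN {d : ℕ} (q : Fin d → ℕ) (V : (Fin d → ℤ) → ℂ) :
    Matrix {n // n ∈ Wcell q} {n // n ∈ Wcell q} ℂ :=
  fun n n' => Vhat q V fun j => ((n.1 j - n'.1 j : ℤ) : ℝ) / (q j : ℝ)

/-- The symbol of the discrete Laplacian: `p(z) = -(Σ_j z_j + z_j⁻¹)`. -/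
def pLap (d : ℕ) : LMv d :=
  - ∑ j : Fin d, ((AddMonoidAlgebra.single (Finsupp.single j (1:ℤ)) (1:ℂ) : LMv d)
      + (AddMonoidAlgebra.single (Finsupp.single j (-1:ℤ)) (1:ℂ) : LMv d))

/-- The exponent vector `(a, b) ∈ ℤ²`. -/
def ee2 (a b : ℤ) : Fin 2 →₀ ℤ := Finsupp.single 0 a + Finsupp.single 1 b

/-- The monomial `z₁^a z₂^b`. -/
def mono2 (a b : ℤ) : LMv 2 := AddMonoidAlgebra.single (ee2 a b) (1:ℂ)

/-- The symbol of the extended Harper lattice Laplacian. -/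
def pEHM : LMv 2 :=
  -(mono2 1 0 + mono2 (-1) 0 + mono2 0 1 + mono2 0 (-1)
    + mono2 1 (-1) + mono2 (-1) 1 + mono2 1 1 + mono2 (-1) (-1))

/-- The symbol of the (sheared) triangular lattice Laplacian. -/
def pTri : LMv 2 :=
  -(mono2 1 0 + mono2 (-1) 0 + mono2 0 1 + mono2 0 (-1) + mono2 1 (-1) + mono2 (-1) 1)

/-!
Over `R = ℂ[z]`, `r_n = A_n λ̃ - z^γ'` with `A_n = z^γ' h(μ_n ⊙ z)`. Two linear polynomials
`a λ̃ - c`, `b λ̃ - c` over a domain are coprime when `a ≠ b`, `c ≠ 0` and `a` is coprime to `c`: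
a common factor divides `b (a λ̃ - c) - a (b λ̃ - c) = (a - b) c`, so it is a constant dividing
`a` and `c`. Here `A_n ≠ A_n'` by (A₂), because multiplication by `z^γ'` is injective on Laurent
polynomials with exponents `≥ -γ'`. And `A_n` is coprime to the monomial `z^γ'`: if `γ_j' > 0`,
the choice of `γ'` makes some monomial of `A_n` free of `z_j`, so `z_j ∤ A_n`.
-/

namespace Polynomial

theorem isRelPrime_C_mul_X_sub_C {R : Type*} [CommRing R] [IsDomain R] {a b c : R}
    (hab : a ≠ b) (hc : c ≠ 0) (hac : IsRelPrime a c) :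
    IsRelPrime (C a * X - C c) (C b * X - C c) := by
  intro f hfa hfb
  have hconst : f ∣ C ((a - b) * c) := by
    have hcomb : C ((a - b) * c) = C b * (C a * X - C c) - C a * (C b * X - C c) := by
      simp only [C_mul, C_sub]; ring
    rw [hcomb]
    exact dvd_sub (dvd_mul_of_dvd_right hfa _) (dvd_mul_of_dvd_right hfb _)
  have hdeg : f.natDegree = 0 := by
    have := natDegree_le_of_dvd hconst (C_ne_zero.2 (mul_ne_zero (sub_ne_zero.2 hab) hc))
    rwa [natDegree_C, Nat.le_zero] at this
  rw [eq_C_of_natDegree_eq_zero hdeg] at hfa ⊢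
  have hcoeff := (C_dvd_iff_dvd_coeff _ _).1 hfa
  refine isUnit_C.2 (hac ?_ ?_)
  · simpa using hcoeff 1
  · simpa using hcoeff 0

end Polynomial

namespace MvPolynomial

theorem not_X_dvd_of_coeff_ne_zero {σ R : Type*} [CommSemiring R] {P : MvPolynomial σ R}
    {m : σ →₀ ℕ} {i : σ} (hm : coeff m P ≠ 0) (hi : m i = 0) : ¬X i ∣ P := by
  classical
  rintro ⟨Q, rfl⟩
  rw [coeff_X_mul', if_neg (by simpa using hi)] at hm
  exact hm rfl

theorem isRelPrime_monomial_one_left {σ R : Type*} [CommRing R] [IsDomain R]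
    [UniqueFactorizationMonoid R] {s : σ →₀ ℕ} {P : MvPolynomial σ R}
    (h : ∀ i ∈ s.support, ¬X i ∣ P) : IsRelPrime (monomial s (1 : R)) P := by
  rw [monomial_eq, C_1, one_mul]
  exact IsRelPrime.prod_left fun i hi =>
    (X_prime.irreducible.isRelPrime_iff_not_dvd.2 (h i hi)).pow_left

def polynomialEquivSumUnit (σ R : Type*) [CommSemiring R] :
    Polynomial (MvPolynomial σ R) ≃ₐ[R] MvPolynomial (σ ⊕ Unit) R :=
  (optionEquivLeft R σ).symm.trans (renameEquiv R (Equiv.optionEquivSumPUnit σ))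

@[simp]
lemma polynomialEquivSumUnit_X (σ R : Type*) [CommSemiring R] :
    polynomialEquivSumUnit σ R Polynomial.X = X (Sum.inr ()) := by
  simp [polynomialEquivSumUnit, optionEquivLeft_symm_X]

@[simp]
lemma polynomialEquivSumUnit_C {σ R : Type*} [CommSemiring R] (s : MvPolynomial σ R) :
    polynomialEquivSumUnit σ R (Polynomial.C s) = rename Sum.inl s := by
  induction s using MvPolynomial.induction_on with
  | C a => simp [polynomialEquivSumUnit, optionEquivLeft_symm_C_C]
  | add s t hs ht => simp only [map_add, hs, ht]
  | mul_X s i hs =>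
      rw [Polynomial.C_mul, map_mul, hs]
      simp [polynomialEquivSumUnit, optionEquivLeft_symm_C_X]

end MvPolynomial

lemma AddMonoidAlgebra.coeff_single_mul_eq_mapDomain {R G : Type*} [Semiring R] [AddGroup G]
    (g : G) (x : AddMonoidAlgebra R G) :
    (single g 1 * x).coeff = Finsupp.mapDomain (g + ·) x.coeff := by
  ext h
  rw [coeff_single_mul_apply, one_mul, ← Finsupp.mapDomain_apply (add_right_injective g),
    add_neg_cancel_left]

open MvPolynomial

section LaurentToPolynomial

variable {d : ℕ}

lemma coeff_scaleZ (c : Fin d → ℂ) (u : LMv d) (α : Fin d →₀ ℤ) :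
    (scaleZ c u).coeff α = (∏ j, c j ^ α j) * u.coeff α := by
  classical
  simp only [scaleZ, AddMonoidAlgebra.coeff_ofCoeff, Finsupp.sum_apply, Finsupp.single_apply]
  rw [Finsupp.sum, Finset.sum_ite_eq']
  split_ifs with hα
  · rfl
  · rw [Finsupp.notMem_support_iff.1 hα, mul_zero]

lemma support_scaleZ {c : Fin d → ℂ} (hc : ∀ j, c j ≠ 0) (u : LMv d) :
    (scaleZ c u).coeff.support = u.coeff.support := by
  ext α
  simp [coeff_scaleZ, Finset.prod_ne_zero_iff, zpow_ne_zero, hc]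

lemma gammaV_add_nonneg {u : LMv d} {α : Fin d →₀ ℤ} (hα : α ∈ u.coeff.support) (j : Fin d) :
    0 ≤ gammaV u j + α j := by
  have hs : (u.coeff.support.image fun β => β j).Nonempty := ⟨_, Finset.mem_image_of_mem _ hα⟩
  have hmin := Finset.min'_le _ _ (Finset.mem_image_of_mem (fun β : Fin d →₀ ℤ => β j) hα)
  rw [gammaV, ← Finset.coe_min' hs, WithTop.untopD_coe]
  omega

lemma exists_gammaV_add_eq_zero {u : LMv d} {j : Fin d} (hj : 0 < gammaV u j) :
    ∃ α ∈ u.coeff.support, gammaV u j + α j = 0 := by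
  have hs : (u.coeff.support.image fun β => β j).Nonempty := by
    by_contra hs
    rw [Finset.not_nonempty_iff_eq_empty] at hs
    simp [gammaV, hs] at hj
  obtain ⟨α, hα, hmin⟩ := Finset.mem_image.1 (Finset.min'_mem _ hs)
  refine ⟨α, hα, ?_⟩
  rw [gammaV, ← Finset.coe_min' hs, WithTop.untopD_coe] at hj ⊢
  omega

def shiftExp (γ α : Fin d →₀ ℤ) : Fin d →₀ ℕ := Finsupp.mapRange Int.toNat Int.toNat_zero (γ + α)

/-- `z^γ u` as an ordinary polynomial. Negative exponents are truncated to `0`, so this is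
faithful only for `u` with exponents in `Set.Ici (-γ)`. -/
def shiftedPoly (γ : Fin d →₀ ℤ) (u : LMv d) : MvPolynomial (Fin d) ℂ :=
  AddMonoidAlgebra.ofCoeff (Finsupp.mapDomain (shiftExp γ) u.coeff)

@[simp]
lemma shiftExp_apply (γ α : Fin d →₀ ℤ) (j : Fin d) : shiftExp γ α j = (γ j + α j).toNat := by
  simp [shiftExp]

lemma shiftExp_injOn (γ : Fin d →₀ ℤ) : Set.InjOn (shiftExp γ) (Set.Ici (-γ)) := by
  intro α hα β hβ h
  ext j
  have hαj := hα j
  have hβj := hβ j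
  have := DFunLike.congr_fun h j
  simp only [shiftExp_apply, Finsupp.neg_apply] at hαj hβj this
  omega

lemma coeff_shiftedPoly {γ : Fin d →₀ ℤ} {u : LMv d} (hu : ↑u.coeff.support ⊆ Set.Ici (-γ))
    {α : Fin d →₀ ℤ} (hα : -γ ≤ α) : coeff (shiftExp γ α) (shiftedPoly γ u) = u.coeff α :=
  Finsupp.mapDomain_apply' _ _ hu (shiftExp_injOn γ) hα

lemma shiftedPoly_injOn (γ : Fin d →₀ ℤ) :
    Set.InjOn (shiftedPoly γ) {u | ↑u.coeff.support ⊆ Set.Ici (-γ)} := fun _ hu _ hv h =>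
  AddMonoidAlgebra.coeff_injective <|
    Finsupp.mapDomain_injOn _ (shiftExp_injOn γ) hu hv (AddMonoidAlgebra.ofCoeff_injective h)

lemma shiftedPoly_one (γ : Fin d →₀ ℤ) : shiftedPoly γ 1 = monomial (shiftExp γ 0) 1 := by
  rw [shiftedPoly, AddMonoidAlgebra.one_def, AddMonoidAlgebra.coeff_single,
    Finsupp.mapDomain_single]
  rfl

lemma isRelPrime_shiftedPoly_monomial {γ : Fin d →₀ ℤ} {u : LMv d}
    (hu : ↑u.coeff.support ⊆ Set.Ici (-γ))
    (hγ : ∀ j, 0 < γ j → ∃ α ∈ u.coeff.support, γ j + α j = 0) :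
    IsRelPrime (shiftedPoly γ u) (monomial (shiftExp γ 0) 1) := by
  refine (isRelPrime_monomial_one_left fun j hj => ?_).symm
  obtain ⟨α, hα, hαj⟩ := hγ j (by simpa using hj)
  refine not_X_dvd_of_coeff_ne_zero (m := shiftExp γ α) ?_ (by simp [hαj])
  rw [coeff_shiftedPoly hu (hu hα)]
  exact Finsupp.mem_support_iff.1 hα

lemma toMvP_eq_ofCoeff_mapDomain (P : LMvF d) :
    toMvP P = AddMonoidAlgebra.ofCoeff (Finsupp.mapDomain (fun β => Finsupp.equivFunOnFinite.symm
      (Sum.elim (fun j => (β.1 j).toNat) (fun _ => β.2.toNat))) P.coeff) := by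
  rw [Finsupp.mapDomain, AddMonoidAlgebra.ofCoeff_finsuppSum]
  rfl

lemma embedZ_one : embedZ (1 : LMv d) = 1 := by
  rw [embedZ, AddMonoidAlgebra.one_def, AddMonoidAlgebra.coeff_single, Finsupp.mapDomain_single]
  rfl

lemma toMvP_single_mul_embedZ (γ : Fin d →₀ ℤ) (u : LMv d) :
    toMvP (AddMonoidAlgebra.single (γ, 0) 1 * embedZ u) = rename Sum.inl (shiftedPoly γ u) := by
  rw [toMvP_eq_ofCoeff_mapDomain, AddMonoidAlgebra.coeff_single_mul_eq_mapDomain, embedZ,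
    AddMonoidAlgebra.coeff_ofCoeff, ← Finsupp.mapDomain_comp, ← Finsupp.mapDomain_comp]
  change _ = AddMonoidAlgebra.ofCoeff
    (Finsupp.mapDomain (Finsupp.mapDomain Sum.inl) (Finsupp.mapDomain (shiftExp γ) u.coeff))
  rw [← Finsupp.mapDomain_comp]
  congr 2
  funext α
  ext (j | _) <;> simp [Finsupp.mapDomain_apply Sum.inl_injective,
    Finsupp.mapDomain_of_notMem_range]

lemma toMvP_ofCoeff_single (γ : Fin d →₀ ℤ) :
    toMvP (AddMonoidAlgebra.ofCoeff (Finsupp.single (γ, (0 : ℤ)) (1 : ℂ)) : LMvF d) =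
      rename Sum.inl (monomial (shiftExp γ 0) 1) := by
  rw [← shiftedPoly_one, ← toMvP_single_mul_embedZ, embedZ_one, mul_one]
  rfl

lemma rPoly_eq (q : Fin d → ℕ) (p : LMv d) (n : Fin d → ℤ) :
    rPoly q p n = polynomialEquivSumUnit (Fin d) ℂ
      (Polynomial.C (shiftedPoly (gammaE' p) (scaleZ (muV q n) (lowComp p))) * Polynomial.X
        - Polynomial.C (monomial (shiftExp (gammaE' p) 0) 1)) := by
  rw [rPoly, toMvP_single_mul_embedZ, toMvP_ofCoeff_single, map_sub, map_mul,
    polynomialEquivSumUnit_C, polynomialEquivSumUnit_X, polynomialEquivSumUnit_C, mul_comm]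

end LaurentToPolynomial

theorem stmt7_general {d : ℕ} (q : Fin d → ℕ) (p : LMv d)
    (hA2 : PairwiseDistinctH q (lowComp p)) :
    ∀ n ∈ Wcell q, ∀ n' ∈ Wcell q, n ≠ n' →
      IsRelPrime (rPoly q p n) (rPoly q p n') := by
  intro n hn n' hn' hne
  set h := lowComp p
  set γ := gammaE' p
  have hμ (m : Fin d → ℤ) (j : Fin d) : muV q m j ≠ 0 := Complex.exp_ne_zero _
  have hsupp (m : Fin d → ℤ) : ↑(scaleZ (muV q m) h).coeff.support ⊆ Set.Ici (-γ) := by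
    rw [support_scaleZ (hμ m)]
    intro α hα j
    simpa [γ, gammaE', neg_le_iff_add_nonneg'] using gammaV_add_nonneg hα j
  have hγ (m : Fin d → ℤ) (j : Fin d) (hj : 0 < γ j) :
      ∃ α ∈ (scaleZ (muV q m) h).coeff.support, γ j + α j = 0 := by
    rw [support_scaleZ (hμ m)]
    exact exists_gammaV_add_eq_zero hj
  rw [rPoly_eq, rPoly_eq]
  refine IsRelPrime.of_map (polynomialEquivSumUnit (Fin d) ℂ).symm ?_
  simp only [AlgEquiv.symm_apply_apply]
  refine Polynomial.isRelPrime_C_mul_X_sub_C ?_ (by simp) (isRelPrime_shiftedPoly_monomial (hsupp n) (hγ n))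
  exact fun heq => hA2 n hn n' hn' hne (shiftedPoly_injOn γ (hsupp n) (hsupp n') heq)

theorem stmt7 {d : ℕ} (hd : 1 ≤ d) (q : Fin d → ℕ) (hq : ∀ j, 1 ≤ q j)
    (p : LMv d) (hp : p ≠ 0)
    (hA2 : PairwiseDistinctH q (lowComp p)) :
    ∀ n ∈ Wcell q, ∀ n' ∈ Wcell q, n ≠ n' →
      IsRelPrime (rPoly q p n) (rPoly q p n') :=
  stmt7_general q p hA2
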